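/- arXiv:math/0609299 — 7 statements merged into one kernel-verified Lean document; each statement's English description precedes it below -/
import Mathlib

section
/- Let H be a closed m-shift system for f. Then: (1) for every n ∈ ℕ and every nonempty set A ⊆ {1,…,m}^n of n-words, the realization set π(A) is a nonempty closed subset of X; and (2) for every nonempty closed set A ⊆ Σ_m, the realization set π(A) = ⋃_{α∈A} π(α) is a nonempty closed subset of X. -/
open Dynamics

/-- Discrete uniformity on `Fin m`, compatible with its discrete topology. -/
instance (m : ℕ) : UniformSpace (Fin m) := ⊥

/-- The one-sided shift map on `Σ_m = {1,…,m}^ℕ`, modelled as `ℕ → Fin m`. -/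
def shiftMap (m : ℕ) : (ℕ → Fin m) → (ℕ → Fin m) := fun a n => a (n + 1)

variable {X : Type*}

/-- `H = (H_1, …, H_m)` is an `m`-shift system for `f`: each `H i` is nonempty and
`f(H_i) ⊇ H_1 ∪ ⋯ ∪ H_m` for every `i`. -/
def IsShiftSystem (f : X → X) {m : ℕ} (H : Fin m → Set X) : Prop :=
  (∀ i, (H i).Nonempty) ∧ ∀ i, (⋃ j, H j) ⊆ f '' H i

/-- A closed `m`-shift system: an `m`-shift system all of whose sets are closed. -/
def IsClosedShiftSystem [TopologicalSpace X] (f : X → X) {m : ℕ} (H : Fin m → Set X) : Prop :=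
  IsShiftSystem f H ∧ ∀ i, IsClosed (H i)

/-- The itinerary set `It(x)` of a point `x`. -/
def itin (f : X → X) {m : ℕ} (H : Fin m → Set X) (x : X) : Set (ℕ → Fin m) :=
  {a | ∀ i : ℕ, f^[i] x ∈ H (a i)}

/-- The itinerary set `It(S) = ⋃_{x ∈ S} It(x)` of a subset `S ⊆ X`. -/
def itinSet (f : X → X) {m : ℕ} (H : Fin m → Set X) (S : Set X) : Set (ℕ → Fin m) :=
  ⋃ x ∈ S, itin f H x

/-- The `n`-itinerary set `It_n(x)` of a point `x`. -/
def itinN (f : X → X) {m : ℕ} (H : Fin m → Set X) (n : ℕ) (x : X) : Set (Fin n → Fin m) :=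
  {w | ∀ i : Fin n, f^[(i : ℕ)] x ∈ H (w i)}

/-- `A(n)`: the set of initial subwords of length `n` of elements of `A ⊆ Σ_m`. -/
def initWords {m : ℕ} (A : Set (ℕ → Fin m)) (n : ℕ) : Set (Fin n → Fin m) :=
  (fun (a : ℕ → Fin m) (i : Fin n) => a (i : ℕ)) '' A

/-- `π(w) = ⋂_{i<n} f^{-i}(H_{w_i})` for a finite word `w`. -/
def piWord (f : X → X) {m n : ℕ} (H : Fin m → Set X) (w : Fin n → Fin m) : Set X :=
  ⋂ i : Fin n, f^[(i : ℕ)] ⁻¹' H (w i)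

/-- `π(α) = ⋂_{i≥0} f^{-i}(H_{α_i})` for a sequence `α ∈ Σ_m`. -/
def piSeq (f : X → X) {m : ℕ} (H : Fin m → Set X) (α : ℕ → Fin m) : Set X :=
  ⋂ i : ℕ, f^[i] ⁻¹' H (α i)

/-- `π(A) = ⋃_{w ∈ A} π(w)` for a set `A` of `n`-words. -/
def piWordSet (f : X → X) {m n : ℕ} (H : Fin m → Set X) (A : Set (Fin n → Fin m)) : Set X :=
  ⋃ w ∈ A, piWord f H w

/-- `π(A) = ⋃_{α ∈ A} π(α)` for a set `A ⊆ Σ_m` of sequences. -/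
def piSeqSet (f : X → X) {m : ℕ} (H : Fin m → Set X) (A : Set (ℕ → Fin m)) : Set X :=
  ⋃ α ∈ A, piSeq f H α

/-- The center `C(H) = ⋂ i, H i`. -/
def centerSet {m : ℕ} (H : Fin m → Set X) : Set X := ⋂ i, H i

/-- The core `Z_0(H) = ⋂_{k≥0} f^{-k}(C(H))`. -/
def coreSet (f : X → X) {m : ℕ} (H : Fin m → Set X) : Set X :=
  ⋂ k : ℕ, f^[k] ⁻¹' centerSet H

/-- The domain `D(H) = ⋂_{k≥0} f^{-k}(ℍ)` where `ℍ = H_1 ∪ ⋯ ∪ H_m`. -/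
def domainSet (f : X → X) {m : ℕ} (H : Fin m → Set X) : Set X :=
  ⋂ k : ℕ, f^[k] ⁻¹' (⋃ j, H j)

/-- The kernel `Ker(H)`: points lying in at least two of the sets `H i`. -/
def kernelSet {m : ℕ} (H : Fin m → Set X) : Set X :=
  {x | ∃ i j, i ≠ j ∧ x ∈ H i ∧ x ∈ H j}

/-- The kernel of `H` is eventually countable: some image `f^j(Ker(H))` is countable. -/
def EventuallyCountableKernel (f : X → X) {m : ℕ} (H : Fin m → Set X) : Prop :=
  ∃ j : ℕ, (f^[j] '' kernelSet H).Countable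

/-- `H` is nontrivial: `H_i \ Z_0(H) ≠ ∅` for every `i`. -/
def IsNontrivialShiftSystem (f : X → X) {m : ℕ} (H : Fin m → Set X) : Prop :=
  ∀ i, (H i \ coreSet f H).Nonempty

/-- A minimal set of `f`: a nonempty closed invariant set with no proper nonempty closed
invariant subset. -/
def IsMinimalSet [TopologicalSpace X] (f : X → X) (M : Set X) : Prop :=
  M.Nonempty ∧ IsClosed M ∧ f '' M ⊆ M ∧
    ∀ M' : Set X, M' ⊆ M → M'.Nonempty → IsClosed M' → f '' M' ⊆ M' → M' = M

/-- A shift-minimal subset of `Σ_m`. -/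
def IsShiftMinimal {m : ℕ} (Γ : Set (ℕ → Fin m)) : Prop :=
  Γ.Nonempty ∧ IsClosed Γ ∧ shiftMap m '' Γ ⊆ Γ ∧
    ∀ Γ' : Set (ℕ → Fin m), Γ' ⊆ Γ → Γ'.Nonempty → IsClosed Γ' →
      shiftMap m '' Γ' ⊆ Γ' → Γ' = Γ

/-- A periodic orbit of `f`. -/
def IsPeriodicOrbit (f : X → X) (P : Set X) : Prop :=
  ∃ (x : X) (n : ℕ), 0 < n ∧ f^[n] x = x ∧ P = Set.range fun i => f^[i] x

/-- The virtual entropy `ĥ(S)`: the topological entropy of the shift restricted to `It(S)`. -/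
noncomputable def virtualEntropy (f : X → X) {m : ℕ} (H : Fin m → Set X) (S : Set X) : EReal :=
  coverEntropy (shiftMap m) (itinSet f H S)

/-- `W` locally divides the shift system `H`. -/
def LocallyDivides [TopologicalSpace X] (f : X → X) {m : ℕ} (H : Fin m → Set X)
    (W : Set X) : Prop :=
  f '' W ⊆ W ∧ (∀ i, (H i \ W).Nonempty) ∧
    ∃ Λ : Set (ℕ → Fin m), IsClosed Λ ∧ shiftMap m '' Λ ⊆ Λ ∧
      coverEntropy (shiftMap m) Λ < (Real.log m : EReal) ∧
      ∃ V ∈ nhdsSet W, ∀ (x : X) (n : ℕ), 1 ≤ n →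
        (∀ i < n, f^[i] x ∈ V \ W) → itinN f H n x ⊆ initWords Λ n

/-- The ω-limit set of `x` under `f`. -/
def omegaLimitSet [TopologicalSpace X] (f : X → X) (x : X) : Set X :=
  ⋂ N : ℕ, closure (Set.range fun n : ℕ => f^[N + n] x)

/-- `limsup` of a sequence of sets: `⋂_{k≥1} ⋃_{i≥k} A_i`. -/
def limsupSets {β : Type*} (A : ℕ → Set β) : Set β :=
  ⋂ k : ℕ, ⋃ i : ℕ, ⋃ _ : k ≤ i, A i

lemma piWord_isClosed [TopologicalSpace X] {f : X → X} (hf : Continuous f) {m n : ℕ}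
    {H : Fin m → Set X} (hcl : ∀ i, IsClosed (H i)) (w : Fin n → Fin m) :
    IsClosed (piWord f H w) :=
  isClosed_iInter fun i => (hcl (w i)).preimage (hf.iterate i)

lemma piWord_nonempty {f : X → X} {m : ℕ} {H : Fin m → Set X}
    (hne : ∀ i, (H i).Nonempty) (hcov : ∀ i, (⋃ j, H j) ⊆ f '' H i) :
    ∀ (n : ℕ) (w : Fin (n + 1) → Fin m), (piWord f H w).Nonempty := by
  intro n
  induction n with
  | zero =>
    intro w
    obtain ⟨x, hx⟩ := hne (w 0)
    exact ⟨x, Set.mem_iInter.2 fun i => by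
      have : i = 0 := Fin.fin_one_eq_zero i
      subst this; simpa using hx⟩
  | succ n ih =>
    intro w
    obtain ⟨y, hy⟩ := ih (fun i => w i.succ)
    have hy0 : y ∈ H (w (0 : Fin (n + 1)).succ) := by
      have := Set.mem_iInter.1 hy 0
      simpa using this
    obtain ⟨x, hx, hfx⟩ := hcov (w 0) (Set.mem_iUnion.2 ⟨_, hy0⟩)
    refine ⟨x, Set.mem_iInter.2 fun i => ?_⟩
    refine Fin.cases ?_ (fun j => ?_) i
    · simpa using hx
    · have hyj := Set.mem_iInter.1 hy j
      simp only [Set.mem_preimage] at hyj ⊢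
      rw [Fin.val_succ, Function.iterate_succ_apply, hfx]
      exact hyj

lemma piWordSet_isClosed [TopologicalSpace X] {f : X → X} (hf : Continuous f) {m n : ℕ}
    {H : Fin m → Set X} (hcl : ∀ i, IsClosed (H i)) (A : Set (Fin n → Fin m)) :
    IsClosed (piWordSet f H A) :=
  (Set.toFinite A).isClosed_biUnion fun w _ => piWord_isClosed hf hcl w

lemma piSeq_eq_iInter {f : X → X} {m : ℕ} (H : Fin m → Set X) (α : ℕ → Fin m) :
    piSeq f H α = ⋂ n : ℕ, piWord f H (fun i : Fin (n + 1) => α i) := by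
  ext x
  simp only [piSeq, piWord, Set.mem_iInter, Set.mem_preimage]
  constructor
  · intro h n i; exact h i
  · intro h i; exact h i ⟨i, Nat.lt_succ_self i⟩

lemma finm_discrete (m : ℕ) : DiscreteTopology (Fin m) := by
  constructor
  rfl

/-- For a closed `m`-shift system: (1) for every `n` and every nonempty set `A` of `n`-words,
`π(A)` is a nonempty closed subset of `X`; (2) for every nonempty closed `A ⊆ Σ_m`,
`π(A)` is a nonempty closed subset of `X`. -/
theorem piSet_nonempty_closed [MetricSpace X] [CompactSpace X]
    {f : X → X} (hf : Continuous f) {m : ℕ} (hm : 1 ≤ m) {H : Fin m → Set X}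
    (hH : IsClosedShiftSystem f H) :
    (∀ (n : ℕ) (A : Set (Fin n → Fin m)), A.Nonempty →
      (piWordSet f H A).Nonempty ∧ IsClosed (piWordSet f H A)) ∧
    (∀ A : Set (ℕ → Fin m), A.Nonempty → IsClosed A →
      (piSeqSet f H A).Nonempty ∧ IsClosed (piSeqSet f H A)) := by
  obtain ⟨⟨hne, hcov⟩, hcl⟩ := hH
  haveI : Nonempty X := ⟨(hne ⟨0, hm⟩).choose⟩
  have hWne : ∀ (n : ℕ) (w : Fin n → Fin m), (piWord f H w).Nonempty := by
    intro n w
    cases n with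
    | zero => exact ⟨Classical.arbitrary X, by simp [piWord]⟩
    | succ n => exact piWord_nonempty hne hcov n w
  constructor
  · intro n A ⟨w, hw⟩
    refine ⟨?_, piWordSet_isClosed hf hcl A⟩
    obtain ⟨x, hx⟩ := hWne n w
    exact ⟨x, Set.mem_biUnion hw hx⟩
  · intro A hAne hAcl
    haveI := finm_discrete m
    haveI : CompactSpace (Fin m) := Finite.compactSpace
    constructor
    · -- nonemptiness: take α ∈ A, π(α) is a nested intersection of nonempty compacts
      obtain ⟨α, hα⟩ := hAne
      set S : ℕ → Set X := fun n => piWord f H (fun i : Fin (n + 1) => α i) with hS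
      have hSne : ∀ n, (S n).Nonempty := fun n => hWne _ _
      have hScl : ∀ n, IsClosed (S n) := fun n => piWord_isClosed hf hcl _
      have hSmono : ∀ n, S (n + 1) ⊆ S n := by
        intro n x hx
        exact Set.mem_iInter.2 fun i =>
          Set.mem_iInter.1 hx ⟨i, i.isLt.trans (Nat.lt_succ_self _)⟩
      have := IsCompact.nonempty_iInter_of_sequence_nonempty_isCompact_isClosed
        S hSmono hSne ((hScl 0).isCompact) hScl
      obtain ⟨x, hx⟩ := this
      refine ⟨x, Set.mem_biUnion hα ?_⟩
      rw [piSeq_eq_iInter]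
      exact hx
    · -- closedness: π(A) = ⋂ n, π(A(n))
      have key : piSeqSet f H A = ⋂ n : ℕ, piWordSet f H (initWords A n) := by
        ext x
        constructor
        · rintro hx
          obtain ⟨α, hα, hxα⟩ := Set.mem_iUnion₂.1 hx
          refine Set.mem_iInter.2 fun n => Set.mem_biUnion ⟨α, hα, rfl⟩ ?_
          exact Set.mem_iInter.2 fun i => Set.mem_iInter.1 hxα i
        · intro hx
          -- build nested nonempty closed subsets of A
          set B : ℕ → Set (ℕ → Fin m) := fun n =>
            A ∩ ⋂ i : Fin n, (fun α => α i) ⁻¹' {c | f^[(i : ℕ)] x ∈ H c} with hB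
          have hBne : ∀ n, (B n).Nonempty := by
            intro n
            have := Set.mem_iInter.1 hx n
            obtain ⟨w, ⟨α, hα, hαw⟩, hxw⟩ := Set.mem_iUnion₂.1 this
            refine ⟨α, hα, Set.mem_iInter.2 fun i => ?_⟩
            have := Set.mem_iInter.1 hxw i
            simp only [Set.mem_preimage] at this ⊢
            rwa [← hαw] at *
          have hBcl : ∀ n, IsClosed (B n) :=
            fun n => hAcl.inter (isClosed_iInter fun i =>
              (isClosed_discrete _).preimage (continuous_apply _))
          have hBmono : ∀ n, B (n + 1) ⊆ B n := by
            intro n α hα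
            exact ⟨hα.1, Set.mem_iInter.2 fun i =>
              Set.mem_iInter.1 hα.2 ⟨i, i.isLt.trans (Nat.lt_succ_self _)⟩⟩
          have := IsCompact.nonempty_iInter_of_sequence_nonempty_isCompact_isClosed
            B hBmono hBne ((hBcl 0).isCompact) hBcl
          obtain ⟨α, hα⟩ := this
          have hαA : α ∈ A := (Set.mem_iInter.1 hα 0).1
          refine Set.mem_biUnion hαA (Set.mem_iInter.2 fun i => ?_)
          have := (Set.mem_iInter.1 hα (i + 1)).2
          have := Set.mem_iInter.1 this ⟨i, Nat.lt_succ_self i⟩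
          exact this
      rw [key]
      exact isClosed_iInter fun n => piWordSet_isClosed hf hcl _
end

section
/- Let H be a closed m-shift system for f and let w be any finite word over {1,…,m}. Then: (1) π(w) is a nonempty closed subset of X; and (2) if W ⊆ X is a set that locally divides H, then π(w) is not contained in W. -/
open Dynamics

variable {X : Type*}

lemma shiftSystem_key {X : Type*} {f : X → X} {m : ℕ} {H : Fin m → Set X}
    (hH : IsShiftSystem f H) :
    ∀ (n : ℕ) (w : Fin n → Fin m) (y : X), y ∈ ⋃ j, H j →
      ∃ x, (∀ i : Fin n, f^[(i : ℕ)] x ∈ H (w i)) ∧ f^[n] x = y := by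
  intro n
  induction n with
  | zero => exact fun w y hy => ⟨y, fun i => i.elim0, rfl⟩
  | succ n ih =>
    intro w y hy
    obtain ⟨x', hx', hfx'⟩ := ih (fun i => w i.succ) y hy
    have hx'H : x' ∈ ⋃ j, H j := by
      cases n with
      | zero =>
        simp only [Function.iterate_zero_apply] at hfx'
        rw [hfx']; exact hy
      | succ k => exact Set.mem_iUnion.2 ⟨_, hx' 0⟩
    obtain ⟨x, hxH, hfx⟩ := hH.2 (w 0) hx'H
    refine ⟨x, ?_, ?_⟩
    · intro i
      rcases Fin.eq_zero_or_eq_succ i with h | ⟨j, rfl⟩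
      · subst h; simpa using hxH
      · have h1 : f^[(j : ℕ) + 1] x = f^[(j : ℕ)] x' := by
          rw [Function.iterate_succ_apply, hfx]
        simpa [Fin.val_succ, h1] using hx' j
    · rw [Function.iterate_succ_apply, hfx, hfx']

lemma invariant_iterate {X : Type*} {f : X → X} {W : Set X} (hW : f '' W ⊆ W)
    {x : X} (hx : x ∈ W) (k : ℕ) : f^[k] x ∈ W := by
  induction k with
  | zero => simpa using hx
  | succ k ih => rw [Function.iterate_succ_apply']; exact hW ⟨_, ih, rfl⟩

/-- For a closed `m`-shift system and any finite word `w`: (1) `π(w)` is a nonempty closed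
subset of `X`; (2) if `W` locally divides `H`, then `π(w)` is not contained in `W`. -/
theorem piWord_nonempty_closed_not_subset [MetricSpace X] [CompactSpace X]
    {f : X → X} (hf : Continuous f) {m : ℕ} (hm : 1 ≤ m) {H : Fin m → Set X}
    (hH : IsClosedShiftSystem f H) {n : ℕ} (w : Fin n → Fin m) :
    ((piWord f H w).Nonempty ∧ IsClosed (piWord f H w)) ∧
      ∀ W : Set X, LocallyDivides f H W → ¬ piWord f H w ⊆ W := by
  have hne : (H ⟨0, hm⟩).Nonempty := hH.1.1 _
  constructor
  · constructor
    · obtain ⟨y, hy⟩ := hne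
      obtain ⟨x, hx, -⟩ := shiftSystem_key hH.1 n w y (Set.mem_iUnion.2 ⟨_, hy⟩)
      exact ⟨x, Set.mem_iInter.2 fun i => hx i⟩
    · exact isClosed_iInter fun i => (hH.2 _).preimage (hf.iterate _)
  · intro W hW hsub
    obtain ⟨hinv, hdiff, -⟩ := hW
    cases n with
    | zero =>
      obtain ⟨y, hyH, hyW⟩ := hdiff ⟨0, hm⟩
      exact hyW (hsub (Set.mem_iInter.2 fun i => i.elim0))
    | succ n =>
      obtain ⟨y, hyH, hyW⟩ := hdiff (w (Fin.last n))
      obtain ⟨x, hx, hfx⟩ := shiftSystem_key hH.1 n (fun i => w i.castSucc) y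
        (Set.mem_iUnion.2 ⟨_, hyH⟩)
      have hxpi : x ∈ piWord f H w := by
        refine Set.mem_iInter.2 fun i => ?_
        rcases Fin.eq_castSucc_or_eq_last i with ⟨j, rfl⟩ | h
        · exact hx j
        · subst h
          simpa [Fin.val_last, hfx] using hyH
      exact hyW (hfx ▸ invariant_iterate hinv (hsub hxpi) n)
end

section
/- Let H be a closed m-shift system for f, and let W_1, …, W_n be sets each of which locally divides H. If the union W = W_1 ∪ ⋯ ∪ W_n satisfies H_i \ W ≠ ∅ for every i = 1, …, m, then W also locally divides H. -/
open Dynamics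

variable {X : Type*}

/-!
Take witnesses `Λ j`, `V j` for the sets `W j` and a window length `M`. Near `W`, a point has its
next `M` iterates in some `V j`, so along an orbit segment in `V \ W` each length-`M` window of an
itinerary is a word of some `Λ j`. Continuing the itinerary past its last letter by the
`Λ j`-sequence chosen there, the windows reaching past that letter are splices of a `Λ j`-word with
the start of a `Λ j'`-sequence. So all itineraries are words of the subshift of finite type whose
allowed `M`-windows are these splices. If `h(Λ j) < t` for all `j`, there are `O(M e^{tM})`
splices, so this subshift has entropy at most `t + O(log M / M)`, below `log m` for large `M`.
-/

open Set Filter Topology Uniformity ExpGrowth ENNReal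

theorem eventually_add_one_mul_le_exp (D : ℝ) {δ : ℝ} (hδ : 0 < δ) :
    ∀ᶠ n : ℕ in atTop, ((n : ℝ) + 1) * D ≤ Real.exp (δ * n) := by
  have h : (fun x : ℝ => D * (x ^ 1 + x ^ 0)) =o[atTop] fun x => Real.exp (δ * x) :=
    ((isLittleO_pow_exp_pos_mul_atTop 1 hδ).add
      (isLittleO_pow_exp_pos_mul_atTop 0 hδ)).const_mul_left D
  filter_upwards [tendsto_natCast_atTop_atTop.eventually (h.bound one_pos)] with n hn
  rw [one_mul, Real.norm_of_nonneg (Real.exp_pos _).le] at hn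
  simpa [mul_comm] using (le_abs_self _).trans hn

section SymbolicEntropy

variable {m : ℕ}

def cylinderEntourage (m p : ℕ) : SetRel (ℕ → Fin m) (ℕ → Fin m) :=
  {ρ | ∀ i < p, ρ.1 i = ρ.2 i}

theorem hasBasis_uniformity_cylinderEntourage :
    (𝓤 (ℕ → Fin m)).HasBasis (fun _ => True) (cylinderEntourage m) := by
  refine ⟨fun U => ⟨fun hU => ?_, fun ⟨p, _, hp⟩ => mem_of_superset ?_ hp⟩⟩
  · rw [Pi.uniformity, mem_iInf] at hU
    obtain ⟨I, hI, V, hV, rfl⟩ := hU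
    obtain ⟨b, hb⟩ := hI.bddAbove
    refine ⟨b + 1, trivial, fun ρ hρ => mem_iInter.2 fun i => ?_⟩
    obtain ⟨V', hV', hsub⟩ := mem_comap.1 (hV i)
    rw [bot_uniformity, mem_principal] at hV'
    exact hsub (hV' (hρ i (Nat.lt_succ_of_le (hb i.2))))
  · have : cylinderEntourage m p = ⋂ i ∈ Finset.range p,
        (fun ρ : (ℕ → Fin m) × (ℕ → Fin m) => (ρ.1 i, ρ.2 i)) ⁻¹' SetRel.id := by
      ext ρ; simp [cylinderEntourage, SetRel.id]
    rw [this, biInter_finset_mem]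
    intro i _
    rw [Pi.uniformity]
    exact mem_iInf_of_mem i
      (preimage_mem_comap (by rw [bot_uniformity]; exact mem_principal_self _))

theorem shiftMap_iterate_apply (k : ℕ) (α : ℕ → Fin m) (i : ℕ) :
    (shiftMap m)^[k] α i = α (k + i) := by
  induction k generalizing α with
  | zero => simp
  | succ k ih => rw [Function.iterate_succ_apply, ih, shiftMap, Nat.succ_add]

theorem mem_dynEntourage_cylinderEntourage {p n : ℕ} {α β : ℕ → Fin m} :
    (α, β) ∈ dynEntourage (shiftMap m) (cylinderEntourage m p) n ↔
      ∀ k < n, ∀ i < p, α (k + i) = β (k + i) := by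
  simp only [mem_dynEntourage, cylinderEntourage, mem_ofPred_eq, shiftMap_iterate_apply]

theorem monotone_ncard_initWords (Γ : Set (ℕ → Fin m)) :
    Monotone fun n => (initWords Γ n).ncard := by
  intro n n' hn
  have : initWords Γ n = (fun (w : Fin n' → Fin m) (i : Fin n) => w (Fin.castLE hn i)) ''
      initWords Γ n' := by
    rw [initWords, initWords, image_image]; rfl
  simpa only [this] using ncard_image_le (toFinite _)

theorem ncard_initWords_le_coverMincard (Γ : Set (ℕ → Fin m)) (n : ℕ) :
    ((initWords Γ n).ncard : ℕ∞) ≤ coverMincard (shiftMap m) Γ (cylinderEntourage m 1) n := by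
  refine le_iInf₂ fun s hs => ?_
  have hsub : initWords Γ n ⊆ (fun (a : ℕ → Fin m) (i : Fin n) => a i) '' s := by
    rintro _ ⟨γ, hγ, rfl⟩
    obtain ⟨α, hα, hγα⟩ := hs hγ
    exact ⟨α, hα, funext fun i =>
      (mem_dynEntourage_cylinderEntourage.1 hγα i i.2 0 one_pos).symm⟩
  exact_mod_cast ((ncard_le_ncard hsub (toFinite _)).trans
    (ncard_image_le s.finite_toSet)).trans_eq (ncard_coe_finset s)

theorem coverMincard_le_ncard_initWords (Γ : Set (ℕ → Fin m)) (p n : ℕ) :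
    coverMincard (shiftMap m) Γ (cylinderEntourage m p) n ≤ (initWords Γ (n + p)).ncard := by
  obtain ⟨s, -, hs⟩ :=
    (surjOn_image (fun (a : ℕ → Fin m) (i : Fin (n + p)) => a i) Γ).exists_bijOn_subset
  have hfin : s.Finite := Finite.of_finite_image (hs.image_eq ▸ toFinite _) hs.injOn
  refine (IsDynCoverOf.coverMincard_le_card (s := hfin.toFinset) fun γ hγ => ?_).trans ?_
  · obtain ⟨α, hα, hαγ⟩ := hs.surjOn ⟨γ, hγ, rfl⟩
    refine ⟨α, by simpa using hα, mem_dynEntourage_cylinderEntourage.2 fun k hk i hi => ?_⟩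
    exact (congrFun hαγ ⟨k + i, by omega⟩).symm
  · rw [← ncard_eq_toFinset_card s hfin, hs.ncard_eq]
    rfl

theorem tendsto_natCast_add_div_natCast_atTop (p : ℕ) :
    Tendsto (fun n : ℕ => ((n + p : ℕ) : EReal) / n) atTop (𝓝 1) := by
  have h : Tendsto (fun n : ℕ => ((n : ℝ) + p) / n) atTop (𝓝 1) := by
    simpa [inv_div] using (tendsto_natCast_div_add_atTop (p : ℝ)).inv₀ one_ne_zero
  refine (EReal.tendsto_coe.2 h).congr' (Eventually.of_forall fun n => ?_)
  rw [EReal.coe_div]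
  norm_cast

theorem coverEntropy_shiftMap_eq_expGrowthSup (Γ : Set (ℕ → Fin m)) :
    coverEntropy (shiftMap m) Γ = expGrowthSup fun n => ((initWords Γ n).ncard : ℝ≥0∞) := by
  rw [coverEntropy_eq_iSup_basis hasBasis_uniformity_cylinderEntourage]
  refine le_antisymm (iSup₂_le fun p _ => ?_) ?_
  · calc coverEntropyEntourage (shiftMap m) Γ (cylinderEntourage m p)
        ≤ expGrowthSup ((fun n => ((initWords Γ n).ncard : ℝ≥0∞)) ∘ fun n => n + p) :=
          expGrowthSup_monotone fun n => by
            have := ENat.toENNReal_le.2 (coverMincard_le_ncard_initWords Γ p n)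
            rwa [ENat.toENNReal_coe] at this
      _ = expGrowthSup fun n => ((initWords Γ n).ncard : ℝ≥0∞) := by
          have hmono : Monotone fun n => ((initWords Γ n).ncard : ℝ≥0∞) :=
            fun _ _ h => Nat.mono_cast (monotone_ncard_initWords Γ h)
          rw [hmono.expGrowthSup_comp
            (tendsto_natCast_add_div_natCast_atTop p) one_ne_zero (by decide), one_mul]
  · refine le_iSup₂_of_le 1 trivial (expGrowthSup_monotone fun n => ?_)
    have := ENat.toENNReal_le.2 (ncard_initWords_le_coverMincard Γ n)
    rwa [ENat.toENNReal_coe] at this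

theorem coverEntropy_le_of_eventually_ncard_initWords_le {Γ : Set (ℕ → Fin m)} {K c : ℝ}
    (h : ∀ᶠ n in atTop, ((initWords Γ n).ncard : ℝ) ≤ K * Real.exp (c * n)) :
    coverEntropy (shiftMap m) Γ ≤ c := by
  rw [coverEntropy_shiftMap_eq_expGrowthSup]
  refine (expGrowthSup_le_of_eventually_le (b := ENNReal.ofReal K) ofReal_ne_top
    (h.mono fun n hn => ?_)).trans expGrowthSup_exp.le
  rw [show (c : EReal) * n = ((c * n : ℝ) : EReal) by norm_cast, EReal.exp_coe,
    ← ofReal_mul' (Real.exp_pos _).le, ← ofReal_natCast]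
  exact ofReal_le_ofReal hn

theorem eventually_ncard_initWords_le_exp {Γ : Set (ℕ → Fin m)} {c : ℝ}
    (h : coverEntropy (shiftMap m) Γ < c) :
    ∀ᶠ n in atTop, ((initWords Γ n).ncard : ℝ) ≤ Real.exp (c * n) := by
  rw [coverEntropy_shiftMap_eq_expGrowthSup] at h
  filter_upwards [eventually_le_exp h] with n hn
  rwa [show (c : EReal) * n = ((c * n : ℝ) : EReal) by norm_cast, EReal.exp_coe,
    ← ofReal_natCast, ofReal_le_ofReal_iff (Real.exp_pos _).le] at hn

theorem exists_forall_ncard_initWords_le_mul_exp {Γ : Set (ℕ → Fin m)} {c : ℝ}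
    (h : coverEntropy (shiftMap m) Γ < c) :
    ∃ C, ∀ n, ((initWords Γ n).ncard : ℝ) ≤ C * Real.exp (c * n) := by
  obtain ⟨N, hN⟩ := eventually_atTop.1 (eventually_ncard_initWords_le_exp h)
  refine ⟨Real.exp (|c| * N), fun n => ?_⟩
  calc ((initWords Γ n).ncard : ℝ) ≤ (initWords Γ (max n N)).ncard := by
        exact_mod_cast monotone_ncard_initWords Γ (le_max_left n N)
    _ ≤ Real.exp (c * (max n N : ℕ)) := hN _ (le_max_right _ _)
    _ ≤ Real.exp (|c| * N) * Real.exp (c * n) := by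
        rw [← Real.exp_add, Real.exp_le_exp]
        rcases le_total n N with hnN | hNn
        · rw [max_eq_right hnN]
          have : (n : ℝ) ≤ N := by exact_mod_cast hnN
          nlinarith [le_abs_self c, abs_nonneg c, (Nat.cast_nonneg n : (0 : ℝ) ≤ n)]
        · rw [max_eq_left hNn]
          nlinarith [abs_nonneg c, (Nat.cast_nonneg N : (0 : ℝ) ≤ N)]

end SymbolicEntropy

section WindowSubshift

variable {m M : ℕ}

def windowSubshift (A : Set (Fin M → Fin m)) : Set (ℕ → Fin m) :=
  {α | ∀ k, (fun i : Fin M => α (k + i)) ∈ A}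

theorem isClosed_windowSubshift (A : Set (Fin M → Fin m)) : IsClosed (windowSubshift A) := by
  have : windowSubshift A = ⋂ k, (fun (α : ℕ → Fin m) (i : Fin M) => α (k + i)) ⁻¹' A := by
    ext; simp [windowSubshift]
  rw [this]
  exact isClosed_iInter fun k =>
    (isClosed_discrete A).preimage
      (continuous_pi fun i : Fin M => continuous_apply (k + (i : ℕ)))

theorem mapsTo_shiftMap_windowSubshift (A : Set (Fin M → Fin m)) :
    MapsTo (shiftMap m) (windowSubshift A) (windowSubshift A) := fun α hα k => by
  convert hα (k + 1) using 2 with i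
  simp only [shiftMap, Nat.add_right_comm]

theorem ncard_initWords_windowSubshift_le (A : Set (Fin M → Fin m)) (hM : 0 < M) (L : ℕ) :
    (initWords (windowSubshift A) L).ncard ≤ A.ncard ^ (L / M + 1) := by
  have hsub : initWords (windowSubshift A) L ⊆
      (fun (u : Fin (L / M + 1) → Fin M → Fin m) (l : Fin L) =>
        u ⟨l / M, Nat.lt_succ_of_le (Nat.div_le_div_right l.2.le)⟩ ⟨l % M, Nat.mod_lt _ hM⟩) ''
      univ.pi fun _ => A := by
    rintro _ ⟨α, hα, rfl⟩
    refine ⟨fun s i => α (s * M + i), fun s _ => hα _, funext fun l => ?_⟩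
    simp only [Nat.div_add_mod']
  refine (ncard_le_ncard hsub (toFinite _)).trans ((ncard_image_le (toFinite _)).trans_eq ?_)
  rw [← Nat.card_coe_set_eq, Nat.card_congr (Equiv.Set.univPi _), Nat.card_fun, Nat.card_fin,
    Nat.card_coe_set_eq]

theorem coverEntropy_windowSubshift_le {A : Set (Fin M → Fin m)} (hM : 0 < M) {c : ℝ}
    (hA : (A.ncard : ℝ) ≤ Real.exp (c * M)) :
    coverEntropy (shiftMap m) (windowSubshift A) ≤ c := by
  rcases A.eq_empty_or_nonempty with rfl | hne
  · rw [eq_empty_of_forall_notMem fun α (hα : α ∈ windowSubshift ∅) => hα 0,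
      coverEntropy_empty]
    exact bot_le
  have hc : 0 ≤ c := by
    have h1 : (1 : ℝ) ≤ A.ncard := by exact_mod_cast (ncard_pos (toFinite A)).2 hne
    have : 0 ≤ c * M := Real.one_le_exp_iff.1 (h1.trans hA)
    exact nonneg_of_mul_nonneg_left this (by exact_mod_cast hM)
  refine coverEntropy_le_of_eventually_ncard_initWords_le (K := Real.exp (c * M))
    (Eventually.of_forall fun L => ?_)
  calc ((initWords (windowSubshift A) L).ncard : ℝ) ≤ (A.ncard : ℝ) ^ (L / M + 1) := by
        exact_mod_cast ncard_initWords_windowSubshift_le A hM L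
    _ ≤ Real.exp (c * M) ^ (L / M + 1) := pow_le_pow_left₀ (Nat.cast_nonneg _) hA _
    _ ≤ Real.exp (c * M) * Real.exp (c * L) := by
        rw [← Real.exp_nat_mul, ← Real.exp_add, Real.exp_le_exp]
        have hdiv : ((L / M : ℕ) : ℝ) * M ≤ L := by exact_mod_cast Nat.div_mul_le_self L M
        push_cast
        nlinarith

end WindowSubshift


section Splice

variable {m : ℕ} {ι : Type*}

def splice {α : Type*} (p : ℕ) (a b : ℕ → α) : ℕ → α :=
  fun k => if k < p then a k else b (k - p)

def spliceWords (Λ : ι → Set (ℕ → Fin m)) (M : ℕ) : Set (Fin M → Fin m) :=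
  ⋃ (p : Fin (M + 1)) (i : ι) (i' : ι), initWords (image2 (splice p) (Λ i) (Λ i')) M

theorem window_mem_spliceWords {Λ : ι → Set (ℕ → Fin m)} {M p : ℕ} (hp : p ≤ M) {i i' : ι}
    {γ γ' : ℕ → Fin m} (hγ : γ ∈ Λ i) (hγ' : γ' ∈ Λ i') {α : ℕ → Fin m} {k : ℕ}
    (h : ∀ l < M, α (k + l) = splice p γ γ' l) :
    (fun l : Fin M => α (k + l)) ∈ spliceWords Λ M :=
  mem_iUnion.2 ⟨⟨p, Nat.lt_succ_of_le hp⟩, mem_iUnion.2 ⟨i, mem_iUnion.2 ⟨i',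
    ⟨splice p γ γ', mem_image2_of_mem hγ hγ', funext fun l => (h l l.2).symm⟩⟩⟩⟩

theorem mem_initWords_windowSubshift_spliceWords {Λ : ι → Set (ℕ → Fin m)}
    (hΛ : ∀ i, MapsTo (shiftMap m) (Λ i) (Λ i)) {M n : ℕ} (hM : 0 < M) (hn : 0 < n)
    {w : Fin n → Fin m}
    (hw : ∀ k < n, ∃ i, ∃ γ ∈ Λ i, ∀ l < M, ∀ h : k + l < n, γ l = w ⟨k + l, h⟩) :
    w ∈ initWords (windowSubshift (spliceWords Λ M)) n := by
  choose i γ hγ hγw using hw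
  set q := n - 1
  have hq : q < n := by omega
  have hβ : γ q hq 0 = w ⟨q, hq⟩ := hγw q hq 0 hM hq
  -- `w`, continued from its last letter on by the sequence chosen there
  let α : ℕ → Fin m := fun j => if h : j < q then w ⟨j, by omega⟩ else γ q hq (j - q)
  refine ⟨α, fun k => ?_, funext fun j => ?_⟩
  · rcases lt_or_ge k q with hk | hk
    · refine window_mem_spliceWords (min_le_right (q - k) M) (hγ k (by omega)) (hγ q hq)
        fun l hl => ?_
      simp only [α, splice]
      split_ifs with h1 h2 h2
      · exact (hγw k (by omega) l hl (by omega)).symm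
      · omega
      · omega
      · congr 1
        omega
    · have hβ' := (hΛ _).iterate (k - q) (hγ q hq)
      refine window_mem_spliceWords (Nat.zero_le M) hβ' hβ' fun l hl => ?_
      simp only [α, splice, shiftMap_iterate_apply, dif_neg (show ¬ k + l < q by omega)]
      congr 1
      omega
  · simp only [α]
    split_ifs with h
    · rfl
    · rw [show (j : ℕ) - q = 0 by omega, hβ]
      congr
      omega

theorem ncard_initWords_image2_splice_le (p M : ℕ) (S T : Set (ℕ → Fin m)) :
    (initWords (image2 (splice p) S T) M).ncard ≤
      (initWords S p).ncard * (initWords T (M - p)).ncard := by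
  have hsub : initWords (image2 (splice p) S T) M ⊆
      (fun uv : (Fin p → Fin m) × (Fin (M - p) → Fin m) => fun i : Fin M =>
        if h : (i : ℕ) < p then uv.1 ⟨i, h⟩ else uv.2 ⟨i - p, by omega⟩) ''
      (initWords S p ×ˢ initWords T (M - p)) := by
    rintro _ ⟨_, ⟨γ, hγ, γ', hγ', rfl⟩, rfl⟩
    refine ⟨(fun i => γ i, fun i => γ' i), ⟨⟨γ, hγ, rfl⟩, ⟨γ', hγ', rfl⟩⟩, funext fun i => ?_⟩
    simp only [splice]
    split_ifs <;> rfl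
  exact (ncard_le_ncard hsub (toFinite _)).trans
    ((ncard_image_le (toFinite _)).trans_eq ncard_prod)

theorem ncard_spliceWords_le [Fintype ι] (Λ : ι → Set (ℕ → Fin m)) (M : ℕ) {C t : ℝ}
    (hΛ : ∀ i n, ((initWords (Λ i) n).ncard : ℝ) ≤ C * Real.exp (t * n)) :
    ((spliceWords Λ M).ncard : ℝ) ≤
      (M + 1) * Fintype.card ι ^ 2 * C ^ 2 * Real.exp (t * M) := by
  have hterm : ∀ (p : Fin (M + 1)) (i i' : ι),
      ((initWords (image2 (splice p) (Λ i) (Λ i')) M).ncard : ℝ) ≤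
        C ^ 2 * Real.exp (t * M) := by
    intro p i i'
    have hp : (p : ℕ) ≤ M := Nat.lt_succ_iff.1 p.2
    calc _ ≤ ((initWords (Λ i) p).ncard : ℝ) * (initWords (Λ i') (M - p)).ncard := by
          exact_mod_cast ncard_initWords_image2_splice_le p M (Λ i) (Λ i')
      _ ≤ (C * Real.exp (t * p)) * (C * Real.exp (t * (M - p : ℕ))) :=
          mul_le_mul (hΛ i p) (hΛ i' _) (Nat.cast_nonneg _) ((Nat.cast_nonneg _).trans (hΛ i p))
      _ = C ^ 2 * Real.exp (t * M) := by
          rw [Nat.cast_sub hp, mul_mul_mul_comm, ← Real.exp_add]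
          ring_nf
  have hcount : (spliceWords Λ M).ncard ≤ ∑ p : Fin (M + 1), ∑ i, ∑ i',
      (initWords (image2 (splice p) (Λ i) (Λ i')) M).ncard :=
    (ncard_iUnion_le_of_fintype _).trans <| Finset.sum_le_sum fun p _ =>
      (ncard_iUnion_le_of_fintype _).trans <| Finset.sum_le_sum fun i _ =>
        ncard_iUnion_le_of_fintype _
  calc ((spliceWords Λ M).ncard : ℝ)
      ≤ ∑ p : Fin (M + 1), ∑ i, ∑ i',
          ((initWords (image2 (splice p) (Λ i) (Λ i')) M).ncard : ℝ) := by
        exact_mod_cast hcount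
    _ ≤ ∑ p : Fin (M + 1), ∑ i : ι, ∑ i' : ι, C ^ 2 * Real.exp (t * M) := by
        gcongr with p _ i _ i' _
        exact hterm p i i'
    _ = (M + 1) * Fintype.card ι ^ 2 * C ^ 2 * Real.exp (t * M) := by
        simp only [Finset.sum_const, Finset.card_univ, Fintype.card_fin, nsmul_eq_mul]
        push_cast
        ring

theorem eventually_coverEntropy_windowSubshift_spliceWords_lt [Fintype ι]
    {Λ : ι → Set (ℕ → Fin m)} {c : ℝ} (h : ∀ i, coverEntropy (shiftMap m) (Λ i) < c) :
    ∀ᶠ M in atTop, coverEntropy (shiftMap m) (windowSubshift (spliceWords Λ M)) < c := by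
  obtain ⟨t, ht, htc⟩ : ∃ t : ℝ, (∀ i, coverEntropy (shiftMap m) (Λ i) < t) ∧ t < c := by
    have hsup : Finset.univ.sup (fun i => coverEntropy (shiftMap m) (Λ i)) < c :=
      (Finset.sup_lt_iff (EReal.bot_lt_coe c)).2 fun i _ => h i
    obtain ⟨t, hst, htc⟩ := EReal.exists_between_coe_real hsup
    exact ⟨t, fun i => (Finset.le_sup (Finset.mem_univ i)).trans_lt hst, by exact_mod_cast htc⟩
  choose C hC using fun i => exists_forall_ncard_initWords_le_mul_exp (ht i)
  have hΛ : ∀ i n, ((initWords (Λ i) n).ncard : ℝ) ≤ (∑ j, |C j|) * Real.exp (t * n) :=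
    fun i n => (hC i n).trans <| by
      gcongr
      exact (le_abs_self _).trans
        (Finset.single_le_sum (fun j _ => abs_nonneg (C j)) (Finset.mem_univ i))
  obtain ⟨t', htt', ht'c⟩ := exists_between htc
  filter_upwards [eventually_add_one_mul_le_exp (Fintype.card ι ^ 2 * (∑ j, |C j|) ^ 2)
    (sub_pos.2 htt'), eventually_gt_atTop 0] with M hM hM0
  refine (coverEntropy_windowSubshift_le hM0 ?_).trans_lt (by exact_mod_cast ht'c)
  calc ((spliceWords Λ M).ncard : ℝ)
      ≤ (M + 1) * Fintype.card ι ^ 2 * (∑ j, |C j|) ^ 2 * Real.exp (t * M) :=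
        ncard_spliceWords_le Λ M hΛ
    _ = ((M + 1) * (Fintype.card ι ^ 2 * (∑ j, |C j|) ^ 2)) * Real.exp (t * M) := by ring
    _ ≤ Real.exp ((t' - t) * M) * Real.exp (t * M) := by gcongr
    _ = Real.exp (t' * M) := by rw [← Real.exp_add]; ring_nf

end Splice

theorem eventually_nhdsSet_forall_iterate_mem [TopologicalSpace X] {f : X → X}
    (hf : Continuous f) {W V : Set X} (hW : MapsTo f W W) (hV : V ∈ 𝓝ˢ W) (M : ℕ) :
    ∀ᶠ y in 𝓝ˢ W, ∀ l < M, f^[l] y ∈ V :=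
  (eventually_all_finite (finite_lt_nat M)).2 fun l _ =>
    (hf.iterate l).tendsto_nhdsSet (hW.iterate l) hV

theorem mem_itinN_iterate {f : X → X} {m : ℕ} {H : Fin m → Set X} {n : ℕ} {x : X}
    {w : Fin n → Fin m} (hw : w ∈ itinN f H n x) {s L : ℕ} (h : s + L ≤ n) :
    (fun l : Fin L => w ⟨s + l, by omega⟩) ∈ itinN f H L (f^[s] x) := fun l => by
  rw [← Function.iterate_add_apply, add_comm]
  exact hw _

theorem locallyDivides_iUnion_general [MetricSpace X]
    {f : X → X} (hf : Continuous f) {m : ℕ} {H : Fin m → Set X}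
    {n : ℕ} (W : Fin n → Set X)
    (hW : ∀ j, LocallyDivides f H (W j))
    (hne : ∀ i, (H i \ ⋃ j, W j).Nonempty) :
    LocallyDivides f H (⋃ j, W j) := by
  choose Λ _ hΛshift hΛent V hV hΛV using fun j => (hW j).2.2
  obtain ⟨M, hM, hent⟩ := ((eventually_gt_atTop 0).and
    (eventually_coverEntropy_windowSubshift_spliceWords_lt hΛent)).exists
  refine ⟨image_iUnion.trans_subset (iUnion_mono fun j => (hW j).1), hne, _,
    isClosed_windowSubshift _, (mapsTo_shiftMap_windowSubshift _).image_subset, hent,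
    ⋃ j, {x | ∀ l < M, f^[l] x ∈ V j}, ?_, ?_⟩
  · rw [nhdsSet_iUnion, mem_iSup]
    exact fun j => mem_of_superset (eventually_nhdsSet_forall_iterate_mem hf
      (mapsTo_iff_image_subset.2 (hW j).1) (hV j) M) (subset_iUnion_of_subset j subset_rfl)
  · intro x k hk horb w hw
    refine mem_initWords_windowSubshift_spliceWords
      (fun j => mapsTo_iff_image_subset.2 (hΛshift j)) hM hk fun s hs => ?_
    obtain ⟨j, hj⟩ := mem_iUnion.1 (horb s hs).1
    have hseg : ∀ l < min M (k - s), f^[l] (f^[s] x) ∈ V j \ W j := fun l hl =>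
      ⟨hj l (by omega), fun hxW => (horb (s + l) (by omega)).2
        (mem_iUnion_of_mem j (by rwa [add_comm, Function.iterate_add_apply]))⟩
    obtain ⟨γ, hγ, hγw⟩ := hΛV j _ _ (by omega) hseg (mem_itinN_iterate hw (by omega))
    exact ⟨j, γ, hγ, fun l hl hsl => congrFun hγw ⟨l, by omega⟩⟩

/-- If each of `W_1, …, W_n` locally divides the closed `m`-shift system `H`, and the union
`W = W_1 ∪ ⋯ ∪ W_n` satisfies `H_i \ W ≠ ∅` for every `i`, then `W` locally divides `H`. -/
theorem locallyDivides_iUnion [MetricSpace X] [CompactSpace X]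
    {f : X → X} (hf : Continuous f) {m : ℕ} (hm : 1 ≤ m) {H : Fin m → Set X}
    (hH : IsClosedShiftSystem f H) {n : ℕ} (W : Fin n → Set X)
    (hW : ∀ j, LocallyDivides f H (W j))
    (hne : ∀ i, (H i \ ⋃ j, W j).Nonempty) :
    LocallyDivides f H (⋃ j, W j) :=
  locallyDivides_iUnion_general hf W hW hne
end

section
/- Let H be a closed m-shift system for f. Suppose A ⊆ Σ_m is closed and shift-invariant, x ∈ X, and y ∈ ω(x) is a point whose itinerary set is disjoint from A: It(y) ∩ A = ∅. Then there exist a neighborhood U of x in X and k ∈ ℕ such that It_k(x′) ∩ A(k) = ∅ for every x′ ∈ U. -/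
open Dynamics

variable {X : Type*}

/-- If `A ⊆ Σ_m` is closed and shift-invariant and `y ∈ ω(x)` has `It(y) ∩ A = ∅`, then
there are a neighborhood `U` of `x` and `k ∈ ℕ` with `It_k(x′) ∩ A(k) = ∅` for all `x′ ∈ U`. -/
theorem itin_disjoint_of_omegaLimit [MetricSpace X] [CompactSpace X]
    {f : X → X} (hf : Continuous f) {m : ℕ} (hm : 1 ≤ m) {H : Fin m → Set X}
    (hH : IsClosedShiftSystem f H) (A : Set (ℕ → Fin m)) (hA : IsClosed A)
    (hAinv : shiftMap m '' A ⊆ A) (x y : X) (hy : y ∈ omegaLimitSet f x)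
    (hdisj : itin f H y ∩ A = ∅) :
    ∃ U ∈ nhds x, ∃ k : ℕ, ∀ x' ∈ U, itinN f H k x' ∩ initWords A k = ∅ := by
  by_contra hcon
  push_neg at hcon
  -- Step 1: extract points x_j close to x with itineraries matching elements of A up to length j
  have key : ∀ j : ℕ, ∃ (x' : X) (a : ℕ → Fin m),
      dist x' x < 1 / (j + 1) ∧ a ∈ A ∧ ∀ i < j, f^[i] x' ∈ H (a i) := by
    intro j
    obtain ⟨x', hx', hne⟩ := hcon (Metric.ball x (1 / (j + 1)))
      (Metric.ball_mem_nhds x (by positivity)) j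
    obtain ⟨w, hw1, hw2⟩ := hne
    obtain ⟨a, haA, haw⟩ := hw2
    refine ⟨x', a, Metric.mem_ball.mp hx', haA, fun i hi => ?_⟩
    have := hw1 ⟨i, hi⟩
    rw [← haw] at this
    exact this
  choose xs as hdist hasA hit using key
  -- A is compact
  have hAc : IsCompact A := hA.isCompact
  obtain ⟨α, hαA, φ, hφ, hφt⟩ := hAc.tendsto_subseq hasA
  -- xs → x
  have hxs : Filter.Tendsto xs Filter.atTop (nhds x) := by
    rw [tendsto_iff_dist_tendsto_zero]
    exact squeeze_zero (fun j => dist_nonneg) (fun j => (hdist j).le)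
      tendsto_one_div_add_atTop_nhds_zero_nat
  -- α is an itinerary of x
  have hαit : ∀ i : ℕ, f^[i] x ∈ H (α i) := by
    intro i
    have hpt : Filter.Tendsto (fun j => as (φ j) i) Filter.atTop (nhds (α i)) :=
      tendsto_pi_nhds.mp hφt i
    have hev : ∀ᶠ j in Filter.atTop, as (φ j) i = α i :=
      hpt ((isOpen_discrete {α i}).mem_nhds rfl)
    have hmem : ∀ᶠ j in Filter.atTop, f^[i] (xs (φ j)) ∈ H (α i) := by
      filter_upwards [hev, Filter.eventually_ge_atTop (i + 1)] with j h1 h2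
      have hij : i < φ j := lt_of_lt_of_le (Nat.lt_of_succ_le h2) hφ.le_apply
      have := hit (φ j) i hij
      rwa [h1] at this
    have htd : Filter.Tendsto (fun j => f^[i] (xs (φ j))) Filter.atTop (nhds (f^[i] x)) :=
      ((hf.iterate i).tendsto x).comp (hxs.comp hφ.tendsto_atTop)
    exact (hH.2 (α i)).mem_of_tendsto htd hmem
  -- Step 2: extract times n_k → ∞ with f^[n_k] x → y
  have key2 : ∀ k : ℕ, ∃ n, k ≤ n ∧ dist (f^[n] x) y < 1 / (k + 1) := by
    intro k
    have hyk : y ∈ closure (Set.range fun n : ℕ => f^[k + n] x) := by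
      have := hy
      rw [omegaLimitSet, Set.mem_iInter] at this
      exact this k
    rw [Metric.mem_closure_iff] at hyk
    obtain ⟨b, ⟨n, rfl⟩, hb⟩ := hyk (1 / (k + 1)) (by positivity)
    exact ⟨k + n, Nat.le_add_right _ _, by rwa [dist_comm]⟩
  choose ns hns hnd using key2
  have hyt : Filter.Tendsto (fun k => f^[ns k] x) Filter.atTop (nhds y) := by
    rw [tendsto_iff_dist_tendsto_zero]
    exact squeeze_zero (fun k => dist_nonneg) (fun k => (hnd k).le)
      tendsto_one_div_add_atTop_nhds_zero_nat
  -- Step 3: iterated shift invariance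
  have hshift : ∀ (n : ℕ) (a : ℕ → Fin m), a ∈ A → (fun i => a (n + i)) ∈ A := by
    intro n
    induction n with
    | zero => intro a ha; simpa using ha
    | succ n ih =>
      intro a ha
      have h1 : shiftMap m a ∈ A := hAinv ⟨a, ha, rfl⟩
      have h2 := ih (shiftMap m a) h1
      have : (fun i => shiftMap m a (n + i)) = fun i => a (n + 1 + i) := by
        funext i; simp only [shiftMap]; congr 1; omega
      rwa [this] at h2
  -- β_k := σ^{n_k} α ∈ A; extract convergent subsequence
  obtain ⟨β, hβA, ψ, hψ, hψt⟩ := hAc.tendsto_subseq (fun k => hshift (ns k) α hαA)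
  -- β is an itinerary of y
  have hβit : ∀ i : ℕ, f^[i] y ∈ H (β i) := by
    intro i
    have hpt : Filter.Tendsto (fun k => α (ns (ψ k) + i)) Filter.atTop (nhds (β i)) :=
      tendsto_pi_nhds.mp hψt i
    have hev : ∀ᶠ k in Filter.atTop, α (ns (ψ k) + i) = β i :=
      hpt ((isOpen_discrete {β i}).mem_nhds rfl)
    have hmem : ∀ᶠ k in Filter.atTop, f^[i] (f^[ns (ψ k)] x) ∈ H (β i) := by
      filter_upwards [hev] with k h1
      have := hαit (ns (ψ k) + i)
      rw [h1, Nat.add_comm, Function.iterate_add_apply] at this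
      exact this
    have htd : Filter.Tendsto (fun k => f^[i] (f^[ns (ψ k)] x)) Filter.atTop (nhds (f^[i] y)) :=
      ((hf.iterate i).tendsto y).comp (hyt.comp hψ.tendsto_atTop)
    exact (hH.2 (β i)).mem_of_tendsto htd hmem
  -- contradiction with hdisj
  exact Set.eq_empty_iff_forall_notMem.mp hdisj β ⟨hβit, hβA⟩
end

section
/- Let H be a closed, nontrivial m-shift system for f whose kernel is eventually countable, and let W ⊆ X be a set which contains every minimal set of f contained in the core Z_0(H) and which locally divides H, with associated closed shift-invariant set Λ ⊆ Σ_m as in the definition of local division. Suppose Γ ⊆ Σ_m is a shift-minimal set such that h(Γ) > h(Λ) and h(Γ) > h(σ restricted to It(M)) for every minimal set M of f disjoint from W. Then there exists k ∈ ℕ such that every point x ∈ X with It_k(x) ∩ Γ(k) ≠ ∅ satisfies f^{k−1}(x) ∈ W. -/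
open Dynamics

variable {X : Type*}

/-! Suppose the claim fails: for every `k` some point follows a word of `Γ` for `k + 1` steps
while its orbit avoids `W`. Fix an open `U` with `W ⊆ U ⊆ V`. If these orbit segments contain
arbitrarily long runs inside `U`, local division turns the runs into arbitrarily long common
prefixes of `Γ` and `Λ`; so `Γ` meets the closed invariant set `Λ`, and minimality of `Γ` gives
`Γ ⊆ Λ`, against `h(Γ) > h(Λ)`. Otherwise the runs have length bounded by some `n`, and a limit
point carries an itinerary in `Γ` while its orbit leaves `U` in every window of `n` steps. These
points form a closed invariant set disjoint from `W`; a minimal set `M` inside it has `It(M)`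
meeting, hence containing, `Γ`, against `h(Γ) > h(It(M))`. -/

open Set Filter Topology

variable {Y : Type*}

lemma CompactSpace.nonempty_iInter_of_eventually_mem [TopologicalSpace Y] [CompactSpace Y]
    {ι : Sort*} {S : ι → Set Y} (hS : ∀ n, IsClosed (S n)) (u : ℕ → Y)
    (hu : ∀ n, ∀ᶠ k in atTop, u k ∈ S n) : (⋂ n, S n).Nonempty := by
  obtain ⟨p, hp⟩ := exists_clusterPt_of_compactSpace (map u atTop)
  exact ⟨p, mem_iInter.2 fun n => (hS n).closure_subset
    (mem_closure_iff_clusterPt.2 (hp.mono (le_principal_iff.2 (hu n))))⟩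

lemma exists_isMinimalSet_subset [TopologicalSpace X] [CompactSpace X] {f : X → X} {K : Set X}
    (hne : K.Nonempty) (hK : IsClosed K) (hf : MapsTo f K K) : ∃ M ⊆ K, IsMinimalSet f M := by
  let S : Set (Set X) := {M | M.Nonempty ∧ IsClosed M ∧ MapsTo f M M}
  have hchain : ∀ c ⊆ S, IsChain (· ⊆ ·) c → c.Nonempty → ∃ lb ∈ S, ∀ s ∈ c, lb ⊆ s := by
    intro c hcS hc hcne
    have : Nonempty c := hcne.to_subtype
    refine ⟨⋂₀ c, ⟨?_, isClosed_sInter fun t ht => (hcS ht).2.1,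
      fun x hx => mem_sInter.2 fun t ht => (hcS ht).2.2 (hx t ht)⟩,
      fun s => sInter_subset_of_mem⟩
    have hdir : DirectedOn (· ⊇ ·) c := fun s hs t ht =>
      (hc.total hs ht).elim (fun h => ⟨s, hs, subset_rfl, h⟩) fun h => ⟨t, ht, h, subset_rfl⟩
    exact IsCompact.nonempty_sInter_of_directed_nonempty_isCompact_isClosed hdir
      (fun t ht => (hcS ht).1) (fun t ht => (hcS ht).2.1.isCompact) fun t ht => (hcS ht).2.1
  obtain ⟨M, hMK, hM⟩ := zorn_superset_nonempty S hchain K ⟨hne, hK, hf⟩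
  exact ⟨M, hMK, hM.prop.1, hM.prop.2.1, hM.prop.2.2.image_subset,
    fun M' hM'M hne' hcl' hinv' =>
      hM.eq_of_subset ⟨hne', hcl', mapsTo_iff_image_subset.2 hinv'⟩ hM'M⟩

section ShiftSpace

variable {m : ℕ}

lemma iterate_shiftMap_apply (a : ℕ → Fin m) (j i : ℕ) : (shiftMap m)^[j] a i = a (i + j) := by
  induction j generalizing a with
  | zero => rfl
  | succ j ih => rw [Function.iterate_succ_apply, ih]; rfl

lemma IsShiftMinimal.subset_of_inter_nonempty {Γ Λ : Set (ℕ → Fin m)} (hΓ : IsShiftMinimal Γ)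
    (hΛ : IsClosed Λ) (hΛinv : MapsTo (shiftMap m) Λ Λ) (h : (Γ ∩ Λ).Nonempty) : Γ ⊆ Λ :=
  inter_eq_left.1 <| hΓ.2.2.2 (Γ ∩ Λ) inter_subset_left h (hΓ.2.1.inter hΛ)
    ((mapsTo_iff_image_subset.2 hΓ.2.2.1).inter_inter hΛinv).image_subset

lemma inter_nonempty_of_forall_exists_agree {Γ Λ : Set (ℕ → Fin m)} (hΓ : IsClosed Γ)
    (hΛ : IsClosed Λ) (h : ∀ n, ∃ a ∈ Γ, ∃ b ∈ Λ, ∀ i < n, a i = b i) : (Γ ∩ Λ).Nonempty := by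
  choose a ha b hb hab using h
  obtain ⟨p, hp⟩ := CompactSpace.nonempty_iInter_of_eventually_mem
    (S := fun i => {p : (ℕ → Fin m) × (ℕ → Fin m) | p.1 ∈ Γ ∧ p.2 ∈ Λ ∧ p.1 i = p.2 i})
    (fun i => (hΓ.preimage continuous_fst).inter ((hΛ.preimage continuous_snd).inter
      (isClosed_eq ((continuous_apply i).comp continuous_fst)
        ((continuous_apply i).comp continuous_snd))))
    (fun n => (a n, b n))
    (fun i => eventually_atTop.2 ⟨i + 1, fun n hn => ⟨ha n, hb n, hab n i (by omega)⟩⟩)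
  have hp := mem_iInter.1 hp
  have hpeq : p.1 = p.2 := funext fun i => (hp i).2.2
  exact ⟨p.1, (hp 0).1, hpeq ▸ (hp 0).2.1⟩

end ShiftSpace

section Itinerary

variable {f : X → X} {m : ℕ} {H : Fin m → Set X}

lemma shiftMap_mem_itin {y : X} {α : ℕ → Fin m} (h : α ∈ itin f H y) :
    shiftMap m α ∈ itin f H (f y) := fun i => by
  rw [← Function.iterate_succ_apply]
  exact h (i + 1)

lemma mem_piSeqSet {Γ : Set (ℕ → Fin m)} {y : X} :
    y ∈ piSeqSet f H Γ ↔ ∃ α ∈ Γ, α ∈ itin f H y := by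
  simp [piSeqSet, piSeq, itin]

lemma mapsTo_itinSet {M : Set X} (hM : MapsTo f M M) :
    MapsTo (shiftMap m) (itinSet f H M) (itinSet f H M) := fun α hα => by
  obtain ⟨y, hy, hα⟩ := mem_iUnion₂.1 hα
  exact mem_iUnion₂.2 ⟨f y, hM hy, shiftMap_mem_itin hα⟩

lemma mapsTo_piSeqSet {Γ : Set (ℕ → Fin m)} (hΓ : MapsTo (shiftMap m) Γ Γ) :
    MapsTo f (piSeqSet f H Γ) (piSeqSet f H Γ) := fun y hy => by
  obtain ⟨α, hαΓ, hα⟩ := mem_piSeqSet.1 hy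
  exact mem_piSeqSet.2 ⟨shiftMap m α, hΓ hαΓ, shiftMap_mem_itin hα⟩

variable [TopologicalSpace X]

lemma isClosed_setOf_iterate_mem (hf : Continuous f) (hH : ∀ i, IsClosed (H i)) (i : ℕ) :
    IsClosed {p : X × (ℕ → Fin m) | f^[i] p.1 ∈ H (p.2 i)} := by
  have : {p : X × (ℕ → Fin m) | f^[i] p.1 ∈ H (p.2 i)} =
      ⋃ j, {p | p.2 i = j} ∩ {p | f^[i] p.1 ∈ H j} := by
    ext p
    simp
  rw [this]
  exact isClosed_iUnion_of_finite fun j =>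
    (isClosed_eq ((continuous_apply i).comp continuous_snd) continuous_const).inter
      ((hH j).preimage ((hf.iterate i).comp continuous_fst))

lemma isClosed_setOf_mem_itin (hf : Continuous f) (hH : ∀ i, IsClosed (H i)) :
    IsClosed {p : X × (ℕ → Fin m) | p.2 ∈ itin f H p.1} := by
  have : {p : X × (ℕ → Fin m) | p.2 ∈ itin f H p.1} = ⋂ i, {p | f^[i] p.1 ∈ H (p.2 i)} := by
    ext p
    simp [itin]
  rw [this]
  exact isClosed_iInter (isClosed_setOf_iterate_mem hf hH)

lemma isClosed_itinSet [CompactSpace X] (hf : Continuous f) (hH : ∀ i, IsClosed (H i))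
    {M : Set X} (hM : IsClosed M) : IsClosed (itinSet f H M) := by
  have : itinSet f H M = Prod.snd '' ({p | p.2 ∈ itin f H p.1} ∩ Prod.fst ⁻¹' M) := by
    ext α
    simp [itinSet, and_comm]
  rw [this]
  exact isClosedMap_snd_of_compactSpace _
    ((isClosed_setOf_mem_itin hf hH).inter (hM.preimage continuous_fst))

lemma isClosed_piSeqSet (hf : Continuous f) (hH : ∀ i, IsClosed (H i)) {Γ : Set (ℕ → Fin m)}
    (hΓ : IsClosed Γ) : IsClosed (piSeqSet f H Γ) := by
  have : piSeqSet f H Γ = Prod.fst '' ({p | p.2 ∈ itin f H p.1} ∩ Prod.snd ⁻¹' Γ) := by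
    ext y
    simp [mem_piSeqSet, and_comm]
  rw [this]
  exact isClosedMap_fst_of_compactSpace _
    ((isClosed_setOf_mem_itin hf hH).inter (hΓ.preimage continuous_snd))

end Itinerary

section LeavesWithin

def leavesWithin (f : X → X) (U : Set X) (n : ℕ) : Set X :=
  {y | ∀ s, ∃ d < n, f^[d + s] y ∉ U}

variable {f : X → X} {U W : Set X} {n : ℕ}

lemma mapsTo_leavesWithin : MapsTo f (leavesWithin f U n) (leavesWithin f U n) :=
  fun y hy s => by
    obtain ⟨d, hd, hdU⟩ := hy (s + 1)
    exact ⟨d, hd, by rwa [← Function.iterate_succ_apply]⟩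

lemma disjoint_leavesWithin (hW : MapsTo f W W) (hWU : W ⊆ U) : Disjoint (leavesWithin f U n) W :=
  disjoint_left.2 fun _ hy hyW =>
    let ⟨_, _, hdU⟩ := hy 0
    hdU (hWU (hW.iterate _ hyW))

variable [TopologicalSpace X]

lemma isClosed_setOf_exists_iterate_notMem (hf : Continuous f) (hU : IsOpen U) (s : ℕ) :
    IsClosed {y | ∃ d < n, f^[d + s] y ∉ U} := by
  have : {y | ∃ d < n, f^[d + s] y ∉ U} = ⋃ d ∈ Iio n, f^[d + s] ⁻¹' Uᶜ := by
    ext y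
    simp
  rw [this]
  exact (finite_Iio n).isClosed_biUnion fun d _ => hU.isClosed_compl.preimage (hf.iterate _)

lemma isClosed_leavesWithin (hf : Continuous f) (hU : IsOpen U) :
    IsClosed (leavesWithin f U n) := by
  have : leavesWithin f U n = ⋂ s, {y | ∃ d < n, f^[d + s] y ∉ U} := by
    ext y
    simp [leavesWithin]
  rw [this]
  exact isClosed_iInter (isClosed_setOf_exists_iterate_notMem hf hU)

end LeavesWithin

section Orbits

variable {f : X → X} {m : ℕ} {H : Fin m → Set X} {Γ : Set (ℕ → Fin m)} {W : Set X}

lemma exists_itin_prefix_and_iterate_notMem (hW : MapsTo f W W) {k : ℕ} {x : X}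
    (hx : (itinN f H (k + 1) x ∩ initWords Γ (k + 1)).Nonempty) (hxW : f^[k] x ∉ W) :
    ∃ γ ∈ Γ, (∀ i ≤ k, f^[i] x ∈ H (γ i)) ∧ ∀ i ≤ k, f^[i] x ∉ W := by
  obtain ⟨w, hw, γ, hγ, rfl⟩ := hx
  refine ⟨γ, hγ, fun i hi => hw ⟨i, by omega⟩, fun i hi hiW => hxW ?_⟩
  rw [← Nat.sub_add_cancel hi, Function.iterate_add_apply]
  exact hW.iterate _ hiW

variable {x : ℕ → X} {γ : ℕ → ℕ → Fin m}

lemma forall_exists_agree_of_long_runs {Λ : Set (ℕ → Fin m)} {U V : Set X}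
    (hVit : ∀ (x : X) (n : ℕ), 1 ≤ n → (∀ i < n, f^[i] x ∈ V \ W) →
      itinN f H n x ⊆ initWords Λ n)
    (hUV : U ⊆ V) (hΓ : MapsTo (shiftMap m) Γ Γ) (hγΓ : ∀ k, γ k ∈ Γ)
    (hit : ∀ k, ∀ i ≤ k, f^[i] (x k) ∈ H (γ k i)) (hW : ∀ k, ∀ i ≤ k, f^[i] (x k) ∉ W)
    (hrun : ∀ n, ∃ k j, j + n ≤ k + 1 ∧ ∀ i < n, f^[i + j] (x k) ∈ U) :
    ∀ n, ∃ a ∈ Γ, ∃ b ∈ Λ, ∀ i < n, a i = b i := by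
  intro n
  obtain ⟨k, j, hjk, hU⟩ := hrun (n + 1)
  have hword : (fun i : Fin (n + 1) => (shiftMap m)^[j] (γ k) i) ∈
      itinN f H (n + 1) (f^[j] (x k)) := fun i => by
    dsimp only
    rw [iterate_shiftMap_apply, ← Function.iterate_add_apply]
    exact hit k _ (by omega)
  have hVW : ∀ i < n + 1, f^[i] (f^[j] (x k)) ∈ V \ W := fun i hi => by
    rw [← Function.iterate_add_apply]
    exact ⟨hUV (hU i hi), hW k _ (by omega)⟩
  obtain ⟨b, hb, hbw⟩ := hVit _ (n + 1) (by omega) hVW hword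
  exact ⟨_, hΓ.iterate j (hγΓ k), b, hb, fun i hi => (congrFun hbw ⟨i, by omega⟩).symm⟩

variable [TopologicalSpace X] {U : Set X} {n : ℕ}

lemma exists_mem_piSeqSet_inter_leavesWithin [CompactSpace X] (hf : Continuous f)
    (hH : ∀ i, IsClosed (H i)) (hU : IsOpen U) (hΓ : IsClosed Γ) (hγΓ : ∀ k, γ k ∈ Γ)
    (hit : ∀ k, ∀ i ≤ k, f^[i] (x k) ∈ H (γ k i))
    (hleave : ∀ k j, j + n ≤ k + 1 → ∃ i < n, f^[i + j] (x k) ∉ U) :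
    (piSeqSet f H Γ ∩ leavesWithin f U n).Nonempty := by
  obtain ⟨p, hp⟩ := CompactSpace.nonempty_iInter_of_eventually_mem
    (S := fun s => {p : X × (ℕ → Fin m) |
      p.2 ∈ Γ ∧ f^[s] p.1 ∈ H (p.2 s) ∧ ∃ d < n, f^[d + s] p.1 ∉ U})
    (fun s => (hΓ.preimage continuous_snd).inter ((isClosed_setOf_iterate_mem hf hH s).inter
      ((isClosed_setOf_exists_iterate_notMem hf hU s).preimage continuous_fst)))
    (fun k => (x k, γ k))
    (fun s => eventually_atTop.2
      ⟨s + n, fun k hk => ⟨hγΓ k, hit k s (by omega), hleave k s (by omega)⟩⟩)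
  have hp := mem_iInter.1 hp
  exact ⟨p.1, mem_piSeqSet.2 ⟨p.2, (hp 0).1, fun s => (hp s).2.1⟩, fun s => (hp s).2.2⟩

lemma exists_isMinimalSet_disjoint_of_mem_piSeqSet_inter_leavesWithin [CompactSpace X]
    (hf : Continuous f) (hH : ∀ i, IsClosed (H i)) (hU : IsOpen U) (hWU : W ⊆ U)
    (hW : MapsTo f W W) (hΓ : IsShiftMinimal Γ) {y : X}
    (hy : y ∈ piSeqSet f H Γ ∩ leavesWithin f U n) :
    ∃ M, IsMinimalSet f M ∧ Disjoint M W ∧ Γ ⊆ itinSet f H M := by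
  obtain ⟨M, hMK, hM⟩ := exists_isMinimalSet_subset ⟨y, hy⟩
    ((isClosed_piSeqSet hf hH hΓ.2.1).inter (isClosed_leavesWithin hf hU))
    ((mapsTo_piSeqSet (mapsTo_iff_image_subset.2 hΓ.2.2.1)).inter_inter mapsTo_leavesWithin)
  obtain ⟨z, hz⟩ := hM.1
  obtain ⟨α, hαΓ, hα⟩ := mem_piSeqSet.1 (hMK hz).1
  exact ⟨M, hM, (disjoint_leavesWithin hW hWU).mono_left (hMK.trans inter_subset_right),
    hΓ.subset_of_inter_nonempty (isClosed_itinSet hf hH hM.2.1)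
      (mapsTo_itinSet (mapsTo_iff_image_subset.2 hM.2.2.1)) ⟨α, hαΓ, mem_iUnion₂.2 ⟨z, hz, hα⟩⟩⟩

end Orbits

theorem exists_time_hits_W_of_gamma_itinerary_general [MetricSpace X] [CompactSpace X]
    {f : X → X} (hf : Continuous f) {m : ℕ} {H : Fin m → Set X}
    (hH : IsClosedShiftSystem f H) (W : Set X) (hWinv : f '' W ⊆ W)
    (Λ : Set (ℕ → Fin m)) (hΛc : IsClosed Λ) (hΛinv : shiftMap m '' Λ ⊆ Λ)
    (V : Set X) (hV : V ∈ nhdsSet W)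
    (hVit : ∀ (x : X) (n : ℕ), 1 ≤ n → (∀ i < n, f^[i] x ∈ V \ W) →
      itinN f H n x ⊆ initWords Λ n)
    (Γ : Set (ℕ → Fin m)) (hΓ : IsShiftMinimal Γ)
    (hΓΛ : coverEntropy (shiftMap m) Λ < coverEntropy (shiftMap m) Γ)
    (hΓM : ∀ M : Set X, IsMinimalSet f M → Disjoint M W →
      coverEntropy (shiftMap m) (itinSet f H M) < coverEntropy (shiftMap m) Γ) :
    ∃ k : ℕ, 0 < k ∧
      ∀ x : X, (itinN f H k x ∩ initWords Γ k).Nonempty → f^[k - 1] x ∈ W := by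
  by_contra hcon
  push Not at hcon
  have hWinv' := mapsTo_iff_image_subset.2 hWinv
  choose x hx using fun k => hcon (k + 1) k.succ_pos
  choose γ hγΓ hit hxW using fun k =>
    exists_itin_prefix_and_iterate_notMem hWinv' (hx k).1 (hx k).2
  obtain ⟨U, hUo, hWU, hUV⟩ := mem_nhdsSet_iff_exists.1 hV
  by_cases hrun : ∀ n, ∃ k j, j + n ≤ k + 1 ∧ ∀ i < n, f^[i + j] (x k) ∈ U
  · have hΓΛ' : Γ ⊆ Λ := hΓ.subset_of_inter_nonempty hΛc (mapsTo_iff_image_subset.2 hΛinv)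
      (inter_nonempty_of_forall_exists_agree hΓ.2.1 hΛc (forall_exists_agree_of_long_runs
        hVit hUV (mapsTo_iff_image_subset.2 hΓ.2.2.1) hγΓ hit hxW hrun))
    exact hΓΛ.not_ge (coverEntropy_monotone _ hΓΛ')
  · push Not at hrun
    obtain ⟨n, hleave⟩ := hrun
    obtain ⟨y, hy⟩ := exists_mem_piSeqSet_inter_leavesWithin hf hH.2 hUo hΓ.2.1 hγΓ hit hleave
    obtain ⟨M, hM, hMW, hΓM'⟩ :=
      exists_isMinimalSet_disjoint_of_mem_piSeqSet_inter_leavesWithin hf hH.2 hUo hWU hWinv' hΓ hy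
    exact (hΓM M hM hMW).not_ge (coverEntropy_monotone _ hΓM')

/-- If `H` satisfies the hypotheses of the main shift-system theorem with locally dividing set
`W` (with associated `Λ` and `V`), and `Γ ⊆ Σ_m` is shift-minimal with entropy exceeding
`h(Λ)` and the entropy of `It(M)` for every minimal set `M` disjoint from `W`, then there is
`k` such that every `x` with `It_k(x) ∩ Γ(k) ≠ ∅` satisfies `f^{k−1}(x) ∈ W`. -/
theorem exists_time_hits_W_of_gamma_itinerary [MetricSpace X] [CompactSpace X]
    {f : X → X} (hf : Continuous f) {m : ℕ} (hm : 1 ≤ m) {H : Fin m → Set X}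
    (hH : IsClosedShiftSystem f H) (hnt : IsNontrivialShiftSystem f H)
    (hker : EventuallyCountableKernel f H)
    (W : Set X) (hWmin : ∀ M : Set X, IsMinimalSet f M → M ⊆ coreSet f H → M ⊆ W)
    (hWinv : f '' W ⊆ W) (hWne : ∀ i, (H i \ W).Nonempty)
    (Λ : Set (ℕ → Fin m)) (hΛc : IsClosed Λ) (hΛinv : shiftMap m '' Λ ⊆ Λ)
    (hΛent : coverEntropy (shiftMap m) Λ < (Real.log m : EReal))
    (V : Set X) (hV : V ∈ nhdsSet W)
    (hVit : ∀ (x : X) (n : ℕ), 1 ≤ n → (∀ i < n, f^[i] x ∈ V \ W) →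
      itinN f H n x ⊆ initWords Λ n)
    (Γ : Set (ℕ → Fin m)) (hΓ : IsShiftMinimal Γ)
    (hΓΛ : coverEntropy (shiftMap m) Λ < coverEntropy (shiftMap m) Γ)
    (hΓM : ∀ M : Set X, IsMinimalSet f M → Disjoint M W →
      coverEntropy (shiftMap m) (itinSet f H M) < coverEntropy (shiftMap m) Γ) :
    ∃ k : ℕ, 0 < k ∧
      ∀ x : X, (itinN f H k x ∩ initWords Γ k).Nonempty → f^[k - 1] x ∈ W :=
  exists_time_hits_W_of_gamma_itinerary_general hf hH W hWinv Λ hΛc hΛinv V hV hVit Γ hΓ hΓΛ hΓM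
end

section
/- Let S be a set of finite binary words that contains the empty word and is closed under taking prefixes. Then for every ℓ ≥ 1, the number of cut ends of S at level ℓ (words of length ℓ in S having at least one proper prefix that is a cutpoint of S) is at most 2^{ℓ−1}. -/
/-- A stump, represented as a set of finite binary words containing the empty word (the root)
and closed under taking prefixes. -/
def IsStump (S : Set (List Bool)) : Prop :=
  [] ∈ S ∧ ∀ w ∈ S, ∀ v : List Bool, v <+: w → v ∈ S

/-- A cutpoint of `S`: a word of `S` exactly one of whose two one-letter extensions lies
in `S`. -/
def IsCutpoint (S : Set (List Bool)) (w : List Bool) : Prop :=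
  w ∈ S ∧ Xor' (w ++ [false] ∈ S) (w ++ [true] ∈ S)

/-- A cut end of `S` at level `ℓ`: a word of length `ℓ` in `S` having at least one proper
prefix which is a cutpoint of `S`. -/
def IsCutEnd (S : Set (List Bool)) (ℓ : ℕ) (w : List Bool) : Prop :=
  w ∈ S ∧ w.length = ℓ ∧ ∃ v : List Bool, v <+: w ∧ v ≠ w ∧ IsCutpoint S v

/-- In any stump, the number of cut ends at level `ℓ ≥ 1` is at most `2^(ℓ−1)`. -/
theorem cutEnds_ncard_le (S : Set (List Bool)) (hS : IsStump S) (ℓ : ℕ) (hℓ : 1 ≤ ℓ) :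
    {w : List Bool | IsCutEnd S ℓ w}.ncard ≤ 2 ^ (ℓ - 1) := by
  classical
  set T := {w : List Bool | IsCutEnd S ℓ w} with hTdef
  set P : List Bool → ℕ → Prop := fun w n => IsCutpoint S (w.take n) ∧ n < ℓ with hPdef
  have hex : ∀ w ∈ T, ∃ n, P w n := by
    intro w hw
    obtain ⟨hwS, hlen, v, hpre, hne, hcut⟩ := hw
    refine ⟨v.length, ?_, ?_⟩
    · rw [← List.prefix_iff_eq_take.mp hpre]; exact hcut
    · rcases lt_or_eq_of_le hpre.length_le with h | h
      · omega
      · exact absurd (hpre.eq_of_length h) hne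
  set N : List Bool → ℕ := fun w => if h : ∃ n, P w n then Nat.find h else 0 with hNdef
  have hN : ∀ w ∈ T, P w (N w) ∧ ∀ m < N w, ¬ P w m := by
    intro w hw
    have h := hex w hw
    simp only [hNdef, dif_pos h]
    exact ⟨Nat.find_spec h, fun m hm => Nat.find_min h hm⟩
  set F : List Bool → List Bool := fun w => w.take (N w) ++ w.drop (N w + 1) with hFdef
  have hlenw : ∀ w ∈ T, w.length = ℓ := fun w hw => hw.2.1
  have hFlen : ∀ w ∈ T, (F w).length = ℓ - 1 := by
    intro w hw
    have h1 := (hN w hw).1.2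
    have h2 := hlenw w hw
    simp only [hFdef, List.length_append, List.length_take, List.length_drop]
    omega
  -- the initial segment of F w of length ≤ N w agrees with that of w
  have htake : ∀ w ∈ T, ∀ m ≤ N w, (F w).take m = w.take m := by
    intro w hw m hm
    have h1 := (hN w hw).1.2
    have h2 := hlenw w hw
    have hln : (w.take (N w)).length = N w := by
      simp [List.length_take]; omega
    rw [hFdef]
    rw [List.take_append_of_le_length (by omega), List.take_take, min_eq_left hm]
  have hdrop : ∀ w ∈ T, (F w).drop (N w) = w.drop (N w + 1) := by
    intro w hw
    have h1 := (hN w hw).1.2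
    have h2 := hlenw w hw
    have hln : (w.take (N w)).length = N w := by
      simp [List.length_take]; omega
    rw [hFdef]; exact List.drop_left' hln
  -- key injectivity
  have hinjF : Set.InjOn F T := by
    intro w hw w' hw' heq
    -- first: N w = N w'
    have hNeq : N w = N w' := by
      by_contra hne
      -- wlog-style: derive contradiction from n < n'
      have key : ∀ a ∈ T, ∀ b ∈ T, F a = F b → N a < N b → False := by
        intro a ha b hb hab hlt
        have h1 : (F b).take (N a) = b.take (N a) :=
          htake b hb (N a) (le_of_lt hlt)
        have h2 : (F a).take (N a) = a.take (N a) := htake a ha (N a) le_rfl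
        have : b.take (N a) = a.take (N a) := by rw [← h1, ← hab, h2]
        exact (hN b hb).2 (N a) hlt ⟨this ▸ (hN a ha).1.1, (hN a ha).1.2⟩
      rcases lt_or_gt_of_ne hne with h | h
      · exact key w hw w' hw' heq h
      · exact key w' hw' w hw heq.symm h
    -- common cutpoint prefix
    have hvtake : w.take (N w) = w'.take (N w) := by
      have := htake w hw (N w) le_rfl
      have h2 := htake w' hw' (N w) (le_of_eq hNeq)
      rw [← this, heq, h2]
    have hn1 := (hN w hw).1.2
    have hn2 : N w < w.length := by rw [hlenw w hw]; exact hn1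
    have hn2' : N w < w'.length := by rw [hlenw w' hw']; exact hn1
    -- children in S
    have hc1 : w.take (N w) ++ [w[N w]'hn2] ∈ S := by
      have hts : w.take (N w + 1) = w.take (N w) ++ [w[N w]'hn2] := by
        rw [List.take_succ]; simp [List.getElem?_eq_getElem hn2]
      have hmem : w.take (N w + 1) ∈ S := hS.2 w hw.1 _ (List.take_prefix _ _)
      rwa [hts] at hmem
    have hc2 : w.take (N w) ++ [w'[N w]'hn2'] ∈ S := by
      have hts : w'.take (N w + 1) = w'.take (N w) ++ [w'[N w]'hn2'] := by
        rw [List.take_succ]; simp [List.getElem?_eq_getElem hn2']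
      have hmem : w'.take (N w + 1) ∈ S := hS.2 w' hw'.1 _ (List.take_prefix _ _)
      rw [hts, ← hvtake] at hmem
      exact hmem
    -- bits agree
    have hcut := (hN w hw).1.1
    have hbits : w[N w]'hn2 = w'[N w]'hn2' := by
      by_contra hbne
      have hboth : w.take (N w) ++ [false] ∈ S ∧ w.take (N w) ++ [true] ∈ S := by
        rcases Bool.eq_false_or_eq_true (w[N w]'hn2) with hb | hb <;>
          rcases Bool.eq_false_or_eq_true (w'[N w]'hn2') with hb' | hb'
        · exact absurd (hb.trans hb'.symm) hbne
        · rw [hb] at hc1; rw [hb'] at hc2; exact ⟨hc2, hc1⟩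
        · rw [hb] at hc1; rw [hb'] at hc2; exact ⟨hc1, hc2⟩
        · exact absurd (hb.trans hb'.symm) hbne
      rcases hcut.2 with ⟨_, ht⟩ | ⟨_, hf⟩
      · exact ht hboth.2
      · exact hf hboth.1
    -- reconstruct w and w'
    have e1 : w = w.take (N w) ++ [w[N w]'hn2] ++ (F w).drop (N w) := by
      rw [hdrop w hw]
      have hts : w.take (N w + 1) = w.take (N w) ++ [w[N w]'hn2] := by
        rw [List.take_succ]; simp [List.getElem?_eq_getElem hn2]
      rw [← hts, List.take_append_drop]
    have hd2 : (F w').drop (N w) = w'.drop (N w + 1) := by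
      have h := hdrop w' hw'; rwa [← hNeq] at h
    have e2 : w' = w'.take (N w) ++ [w'[N w]'hn2'] ++ (F w').drop (N w) := by
      rw [hd2]
      have hts : w'.take (N w + 1) = w'.take (N w) ++ [w'[N w]'hn2'] := by
        rw [List.take_succ]; simp [List.getElem?_eq_getElem hn2']
      rw [← hts, List.take_append_drop]
    have hmid : w.take (N w) ++ [w[N w]'hn2] ++ (F w).drop (N w)
        = w'.take (N w) ++ [w'[N w]'hn2'] ++ (F w').drop (N w) := by
      rw [hvtake, hbits, heq]
    exact e1.trans (hmid.trans e2.symm)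
  -- transfer to functions Fin (ℓ-1) → Bool
  set G : List Bool → (Fin (ℓ - 1) → Bool) := fun w i => (F w).getD i false with hGdef
  have hinjG : Set.InjOn G T := by
    intro w hw w' hw' h
    apply hinjF hw hw'
    apply List.ext_getElem (by rw [hFlen w hw, hFlen w' hw'])
    intro i h1 h2
    have hi : i < ℓ - 1 := by rwa [hFlen w hw] at h1
    have := congrFun h ⟨i, hi⟩
    simpa [hGdef, List.getD_eq_getElem?_getD, List.getElem?_eq_getElem, h1, h2] using this
  calc T.ncard ≤ (Set.univ : Set (Fin (ℓ - 1) → Bool)).ncard :=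
        Set.ncard_le_ncard_of_injOn G (fun a _ => Set.mem_univ _) hinjG Set.finite_univ
    _ = 2 ^ (ℓ - 1) := by simp [Set.ncard_univ]
end

section
/- Let X be a compact, locally connected metric space, f : X → X continuous, Y ⊆ X an open set, and ψ = (ψ_1, …, ψ_m) an m-section of f on Y such that var(ψ, U) < (1/2)·Δ(ψ, U) for every connected component U of Y. If (y_i) is a sequence in Y and (j_i) a sequence in {1, …, m} such that the points ψ_{j_i}(y_i) converge to a point x ∈ X with f(x) ∈ Y, then the sequence (j_i) is eventually constant. -/
/-- An `m`-section of `f` on `Y`: for each `y ∈ Y`, the points `ψ y 1, …, ψ y m` are `m`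
pairwise distinct preimages of `y` under `f`. -/
def IsMSection {X : Type*} (f : X → X) {m : ℕ} (ψ : X → Fin m → X) (Y : Set X) : Prop :=
  ∀ y ∈ Y, Function.Injective (ψ y) ∧ ∀ j : Fin m, f (ψ y j) = y

/-- The mesh `Δ(ψ, U)`: the infimum over `y ∈ U` of the minimal distance between two
distinct points of the section at `y`. -/
noncomputable def sectionMesh {X : Type*} [MetricSpace X] {m : ℕ} (ψ : X → Fin m → X)
    (U : Set X) : ℝ :=
  sInf {r : ℝ | ∃ y ∈ U, ∃ j j' : Fin m, j ≠ j' ∧ r = dist (ψ y j) (ψ y j')}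

/-- The variation `var(ψ, U)`: the supremum over `y, y' ∈ U` and indices `j` of the distance
`d(ψ_j(y), ψ_j(y'))`. -/
noncomputable def sectionVar {X : Type*} [MetricSpace X] {m : ℕ} (ψ : X → Fin m → X)
    (U : Set X) : ℝ :=
  sSup {r : ℝ | ∃ y ∈ U, ∃ y' ∈ U, ∃ j : Fin m, r = dist (ψ y j) (ψ y' j)}

/-- If `ψ` is an `m`-section of `f` on an open set `Y` with `var(ψ,U) < Δ(ψ,U)/2` on every
connected component `U` of `Y`, and `ψ_{j_i}(y_i) → x` with `f(x) ∈ Y`, then the sequence of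
indices `j_i` is eventually constant. -/
theorem index_eventually_constant
    {X : Type*} [MetricSpace X] [CompactSpace X] [LocallyConnectedSpace X]
    {f : X → X} (hf : Continuous f) {m : ℕ} {Y : Set X} (hY : IsOpen Y)
    {ψ : X → Fin m → X} (hψ : IsMSection f ψ Y)
    (hvar : ∀ z ∈ Y, sectionVar ψ (connectedComponentIn Y z)
      < sectionMesh ψ (connectedComponentIn Y z) / 2)
    (y : ℕ → X) (hy : ∀ i, y i ∈ Y) (j : ℕ → Fin m) (x : X)
    (hconv : Filter.Tendsto (fun i => ψ (y i) (j i)) Filter.atTop (nhds x))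
    (hfx : f x ∈ Y) :
    ∃ (c : Fin m) (N : ℕ), ∀ i ≥ N, j i = c := by
  classical
  set U := connectedComponentIn Y (f x) with hU
  have hUopen : IsOpen U := hY.connectedComponentIn
  have hfxU : f x ∈ U := mem_connectedComponentIn hfx
  obtain ⟨C, hC⟩ : ∃ C, ∀ a b : X, dist a b ≤ C := by
    obtain ⟨C, hC⟩ := Metric.isBounded_iff.mp (isCompact_univ (X := X)).isBounded
    exact ⟨C, fun a b => hC (Set.mem_univ a) (Set.mem_univ b)⟩
  set V := sectionVar ψ U with hVdef
  set Δ := sectionMesh ψ U with hΔdef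
  have hbddV : BddAbove {r : ℝ | ∃ a ∈ U, ∃ b ∈ U, ∃ k : Fin m, r = dist (ψ a k) (ψ b k)} :=
    ⟨C, by rintro r ⟨a, _, b, _, k, rfl⟩; exact hC _ _⟩
  have hVle : ∀ a ∈ U, ∀ b ∈ U, ∀ k : Fin m, dist (ψ a k) (ψ b k) ≤ V :=
    fun a ha b hb k => le_csSup hbddV ⟨a, ha, b, hb, k, rfl⟩
  have hV0 : 0 ≤ V := by
    have := hVle (f x) hfxU (f x) hfxU (j 0)
    simpa using this
  have hΔle : ∀ a ∈ U, ∀ k k' : Fin m, k ≠ k' → Δ ≤ dist (ψ a k) (ψ a k') := by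
    intro a ha k k' hkk'
    exact csInf_le ⟨0, by rintro r ⟨b, _, k1, k2, _, rfl⟩; positivity⟩ ⟨a, ha, k, k', hkk', rfl⟩
  have hVΔ : V < Δ / 2 := hvar (f x) hfx
  have hΔpos : 0 < Δ := by linarith
  set ε := (Δ - V) / 4 with hε
  have hεpos : 0 < ε := by rw [hε]; linarith
  have hyconv : Filter.Tendsto y Filter.atTop (nhds (f x)) := by
    have h1 := (hf.tendsto x).comp hconv
    have h2 : ∀ i, f (ψ (y i) (j i)) = y i := fun i => (hψ (y i) (hy i)).2 (j i)
    simpa [Function.comp_def, h2] using h1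
  have hev1 : ∀ᶠ i in Filter.atTop, y i ∈ U := hyconv.eventually_mem (hUopen.mem_nhds hfxU)
  have hev2 : ∀ᶠ i in Filter.atTop, dist (ψ (y i) (j i)) x < ε :=
    hconv.eventually_mem (Metric.ball_mem_nhds x hεpos)
  obtain ⟨N, hN⟩ := Filter.eventually_atTop.mp (hev1.and hev2)
  refine ⟨j N, N, fun i hi => ?_⟩
  by_contra hne
  have hUi := (hN i hi).1
  have hUN := (hN N le_rfl).1
  have hdi := (hN i hi).2
  have hdN := (hN N le_rfl).2
  have h1 : Δ ≤ dist (ψ (y i) (j i)) (ψ (y i) (j N)) := hΔle _ hUi _ _ hne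
  have h2 : dist (ψ (y N) (j N)) (ψ (y i) (j N)) ≤ V := hVle _ hUN _ hUi _
  have h3 : dist (ψ (y i) (j i)) (ψ (y i) (j N)) ≤
      dist (ψ (y i) (j i)) x + dist x (ψ (y N) (j N)) + dist (ψ (y N) (j N)) (ψ (y i) (j N)) :=
    dist_triangle4 _ _ _ _
  have hdN' : dist x (ψ (y N) (j N)) < ε := by rw [dist_comm]; exact hdN
  linarith
end
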